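/- arXiv:0905.0575 — 2 statements merged into one kernel-verified Lean document; each statement's English description precedes it below -/
import Mathlib

section
/- If a lambda term t beta-eta-reduces (in the combined reduction) to a term t', then there exists a lambda term u such that t beta-reduces to u and u eta-reduces to t' (i.e., eta-steps can be postponed after beta-steps). -/
/-- Untyped lambda terms (de Bruijn representation). -/
inductive Lam : Type
| var : ℕ → Lam
| app : Lam → Lam → Lam
| lam : Lam → Lam

namespace Lam

/-- Lift (shift) the free indices ≥ d by one. -/
def lift : Lam → ℕ → Lam
| var i, d => if i < d then var i else var (i+1)
| app a b, d => app (a.lift d) (b.lift d)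
| lam a, d => lam (a.lift (d+1))

/-- Substitution of `u` for the de Bruijn index `k`. -/
def subst : Lam → ℕ → Lam → Lam
| var i, k, u => if i = k then u else if k < i then var (i-1) else var i
| app a b, k, u => app (a.subst k u) (b.subst k u)
| lam a, k, u => lam (a.subst (k+1) (u.lift 0))

/-- Free variables. -/
def FV : Lam → Set ℕ
| var i => {i}
| app a b => a.FV ∪ b.FV
| lam a => {i | i + 1 ∈ a.FV}

end Lam

/-- One-step beta reduction. -/
inductive Beta : Lam → Lam → Prop
| head (a u : Lam) : Beta (.app (.lam a) u) (a.subst 0 u)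
| appL {a a' : Lam} (b : Lam) : Beta a a' → Beta (.app a b) (.app a' b)
| appR (a : Lam) {b b' : Lam} : Beta b b' → Beta (.app a b) (.app a b')
| lam {a a' : Lam} : Beta a a' → Beta (.lam a) (.lam a')

/-- One-step eta reduction: `λx.(t)x → t` when `x ∉ Fv t`
(in de Bruijn style, the body is a lifted term applied to index 0). -/
inductive Eta : Lam → Lam → Prop
| head (a : Lam) : Eta (.lam (.app (a.lift 0) (.var 0))) a
| appL {a a' : Lam} (b : Lam) : Eta a a' → Eta (.app a b) (.app a' b)
| appR (a : Lam) {b b' : Lam} : Eta b b' → Eta (.app a b) (.app a b')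
| lam {a a' : Lam} : Eta a a' → Eta (.lam a) (.lam a')

/-- One-step beta-eta reduction. -/
def BetaEta (t u : Lam) : Prop := Beta t u ∨ Eta t u

def BetaStar : Lam → Lam → Prop := Relation.ReflTransGen Beta
def EtaStar : Lam → Lam → Prop := Relation.ReflTransGen Eta
def BetaEtaStar : Lam → Lam → Prop := Relation.ReflTransGen BetaEta

/-- Beta-equivalence: smallest equivalence relation containing one-step beta. -/
def BetaEqv : Lam → Lam → Prop := Relation.EqvGen Beta
/-- Beta-eta-equivalence. -/
def BetaEtaEqv : Lam → Lam → Prop := Relation.EqvGen BetaEta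

/-- Normal form: no beta- or eta-redex. -/
def NormalForm (t : Lam) : Prop := ∀ u, ¬ BetaEta t u
/-- Normalizable: beta-eta-reduces to a normal form. -/
def Normalizable (t : Lam) : Prop := ∃ u, BetaEtaStar t u ∧ NormalForm u
/-- Closed term: no free variables. -/
def Closed (t : Lam) : Prop := t.FV = ∅

/-- Beta-saturated set of lambda terms. -/
def Saturated (G : Set Lam) : Prop := ∀ t u, BetaStar t u → u ∈ G → t ∈ G
/-- Set closed under beta-eta-equivalence. -/
def SaturatedBE (G : Set Lam) : Prop := ∀ t u, BetaEtaEqv t u → u ∈ G → t ∈ G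
/-- Arrow construction on sets of lambda terms. -/
def ArrowSet (G G' : Set Lam) : Set Lam := {u | ∀ t ∈ G, Lam.app u t ∈ G'}

namespace Lam

theorem lift_lift (a : Lam) : ∀ i j, i ≤ j → (a.lift i).lift (j+1) = (a.lift j).lift i := by
  induction a with
  | var n =>
    intro i j h
    simp only [lift]
    split_ifs <;> simp only [lift] <;> split_ifs <;> first | rfl | omega
  | app a b iha ihb => intro i j h; simp only [lift, iha i j h, ihb i j h]
  | lam a iha =>
    intro i j h
    simp only [lift]
    rw [iha (i+1) (j+1) (by omega)]

theorem lift_subst_le (a : Lam) : ∀ b k d, k ≤ d →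
    (a.subst k b).lift d = (a.lift (d+1)).subst k (b.lift d) := by
  induction a with
  | var n =>
    intro b k d h
    simp only [subst, lift]
    split_ifs <;> simp only [subst, lift] <;> split_ifs <;> first | rfl | omega | (exfalso; omega) | (congr 1; omega)
  | app a b iha ihb => intro c k d h; simp only [subst, lift, iha c k d h, ihb c k d h]
  | lam a iha =>
    intro b k d h
    simp only [subst, lift]
    rw [iha (b.lift 0) (k+1) (d+1) (by omega), lift_lift b 0 d (by omega)]

theorem subst_lift_ge (a : Lam) : ∀ b k d, d ≤ k →
    (a.subst k b).lift d = (a.lift d).subst (k+1) (b.lift d) := by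
  induction a with
  | var n =>
    intro b k d h
    simp only [subst, lift]
    split_ifs <;> simp only [subst, lift] <;> split_ifs <;> first | rfl | omega | (congr 1; omega)
  | app a b iha ihb => intro c k d h; simp only [subst, lift, iha c k d h, ihb c k d h]
  | lam a iha =>
    intro b k d h
    simp only [subst, lift]
    rw [iha (b.lift 0) (k+1) (d+1) (by omega), lift_lift b 0 d (by omega)]

theorem subst_lift_cancel (a : Lam) : ∀ d, (a.lift (d+1)).subst d (var d) = a := by
  induction a with
  | var n =>
    intro d
    simp only [lift, subst]
    split_ifs <;> simp only [subst] <;> split_ifs <;> first | rfl | omega | (congr 1; omega)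
  | app a b iha ihb => intro d; simp only [lift, subst, iha d, ihb d]
  | lam a iha =>
    intro d
    simp only [lift, subst]
    rw [if_neg (Nat.not_lt_zero d), iha (d+1)]

end Lam

open Lam in
/-- Parallel beta reduction. -/
inductive ParBeta : Lam → Lam → Prop
| var (i : ℕ) : ParBeta (.var i) (.var i)
| app {a a' b b' : Lam} : ParBeta a a' → ParBeta b b' → ParBeta (.app a b) (.app a' b')
| lam {a a' : Lam} : ParBeta a a' → ParBeta (.lam a) (.lam a')
| head {a a' b b' : Lam} : ParBeta a a' → ParBeta b b' →
    ParBeta (.app (.lam a) b) (a'.subst 0 b')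

theorem parBeta_refl (a : Lam) : ParBeta a a := by
  induction a with
  | var i => exact ParBeta.var i
  | app a b iha ihb => exact ParBeta.app iha ihb
  | lam a iha => exact ParBeta.lam iha

theorem beta_parBeta {a b : Lam} (h : Beta a b) : ParBeta a b := by
  induction h with
  | head a u => exact ParBeta.head (parBeta_refl a) (parBeta_refl u)
  | appL b _ ih => exact ParBeta.app ih (parBeta_refl b)
  | appR a _ ih => exact ParBeta.app (parBeta_refl a) ih
  | lam _ ih => exact ParBeta.lam ih

theorem betaStar_appL {a a' : Lam} (b : Lam) (h : BetaStar a a') :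
    BetaStar (.app a b) (.app a' b) :=
  Relation.ReflTransGen.lift (fun x => Lam.app x b) (fun _ _ h => Beta.appL b h) _ _ h

theorem betaStar_appR (a : Lam) {b b' : Lam} (h : BetaStar b b') :
    BetaStar (.app a b) (.app a b') :=
  Relation.ReflTransGen.lift (fun x => Lam.app a x) (fun _ _ h => Beta.appR a h) _ _ h

theorem betaStar_lam {a a' : Lam} (h : BetaStar a a') : BetaStar (.lam a) (.lam a') :=
  Relation.ReflTransGen.lift Lam.lam (fun _ _ h => Beta.lam h) _ _ h

theorem parBeta_betaStar {a b : Lam} (h : ParBeta a b) : BetaStar a b := by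
  induction h with
  | var i => exact Relation.ReflTransGen.refl
  | app _ _ iha ihb => exact (betaStar_appL _ iha).trans (betaStar_appR _ ihb)
  | lam _ iha => exact betaStar_lam iha
  | head _ _ iha ihb =>
    exact ((betaStar_appL _ (betaStar_lam iha)).trans (betaStar_appR _ ihb)).tail
      (Beta.head _ _)

theorem etaStar_appL {a a' : Lam} (b : Lam) (h : EtaStar a a') :
    EtaStar (.app a b) (.app a' b) :=
  Relation.ReflTransGen.lift (fun x => Lam.app x b) (fun _ _ h => Eta.appL b h) _ _ h

theorem etaStar_appR (a : Lam) {b b' : Lam} (h : EtaStar b b') :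
    EtaStar (.app a b) (.app a b') :=
  Relation.ReflTransGen.lift (fun x => Lam.app a x) (fun _ _ h => Eta.appR a h) _ _ h

theorem etaStar_lam {a a' : Lam} (h : EtaStar a a') : EtaStar (.lam a) (.lam a') :=
  Relation.ReflTransGen.lift Lam.lam (fun _ _ h => Eta.lam h) _ _ h

theorem parBeta_lift {a a' : Lam} (h : ParBeta a a') : ∀ d, ParBeta (a.lift d) (a'.lift d) := by
  induction h with
  | var i => intro d; simp only [Lam.lift]; split_ifs <;> apply parBeta_refl
  | app _ _ iha ihb => intro d; exact ParBeta.app (iha d) (ihb d)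
  | lam _ iha => intro d; exact ParBeta.lam (iha (d+1))
  | head _ _ iha ihb =>
    intro d
    rw [Lam.lift_subst_le _ _ 0 d (Nat.zero_le d)]
    exact ParBeta.head (iha (d+1)) (ihb d)

theorem eta_lift {a a' : Lam} (h : Eta a a') : ∀ d, Eta (a.lift d) (a'.lift d) := by
  induction h with
  | head a =>
    intro d
    simp only [Lam.lift, if_pos (Nat.zero_lt_succ d)]
    rw [Lam.lift_lift a 0 d (Nat.zero_le d)]
    exact Eta.head (a.lift d)
  | appL b _ ih => intro d; exact Eta.appL _ (ih d)
  | appR a _ ih => intro d; exact Eta.appR _ (ih d)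
  | lam _ ih => intro d; exact Eta.lam (ih (d+1))

theorem eta_subst_left {a a' : Lam} (h : Eta a a') :
    ∀ k u, Eta (a.subst k u) (a'.subst k u) := by
  induction h with
  | head a =>
    intro k u
    simp only [Lam.subst]
    rw [if_neg (by omega : ¬ (0 : ℕ) = k + 1), if_neg (by omega : ¬ k + 1 < 0)]
    rw [show (a.lift 0).subst (k+1) (u.lift 0) = (a.subst k u).lift 0 from
      (Lam.subst_lift_ge a u k 0 (Nat.zero_le k)).symm]
    exact Eta.head _
  | appL b _ ih => intro k u; exact Eta.appL _ (ih k u)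
  | appR a _ ih => intro k u; exact Eta.appR _ (ih k u)
  | lam _ ih => intro k u; exact Eta.lam (ih (k+1) (u.lift 0))

theorem etaStar_subst_left {a a' : Lam} (h : EtaStar a a') (k : ℕ) (u : Lam) :
    EtaStar (a.subst k u) (a'.subst k u) := by
  induction h with
  | refl => exact Relation.ReflTransGen.refl
  | tail _ h2 ih => exact ih.tail (eta_subst_left h2 k u)

theorem eta_subst_right (s : Lam) : ∀ {u u' : Lam} (k : ℕ), Eta u u' →
    EtaStar (s.subst k u) (s.subst k u') := by
  induction s with
  | var i =>
    intro u u' k h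
    simp only [Lam.subst]
    split_ifs
    · exact Relation.ReflTransGen.single h
    · exact Relation.ReflTransGen.refl
    · exact Relation.ReflTransGen.refl
  | app a b iha ihb =>
    intro u u' k h
    exact (etaStar_appL _ (iha k h)).trans (etaStar_appR _ (ihb k h))
  | lam a iha =>
    intro u u' k h
    exact etaStar_lam (iha (k+1) (eta_lift h 0))

theorem etaStar_subst_right (s : Lam) {u u' : Lam} (k : ℕ) (h : EtaStar u u') :
    EtaStar (s.subst k u) (s.subst k u') := by
  induction h with
  | refl => exact Relation.ReflTransGen.refl
  | tail _ h2 ih => exact ih.trans (eta_subst_right s k h2)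

def lamSize : Lam → ℕ
| .var _ => 1
| .app a b => lamSize a + lamSize b + 1
| .lam a => lamSize a + 1

theorem eta_parBeta_swap : ∀ n t u v, lamSize t < n → Eta t u → ParBeta u v →
    ∃ w, ParBeta t w ∧ EtaStar w v := by
  intro n
  induction n with
  | zero => intro t u v h; exact absurd h (Nat.not_lt_zero _)
  | succ n ih =>
    intro t u v hs he hb
    cases he with
    | head a =>
      exact ⟨.lam (.app (v.lift 0) (.var 0)),
        ParBeta.lam (ParBeta.app (parBeta_lift hb 0) (ParBeta.var 0)),
        Relation.ReflTransGen.single (Eta.head v)⟩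
    | appL b hA =>
      cases hb with
      | @app _ a'' _ b'' ha hbb =>
        obtain ⟨w1, hw1, hw1'⟩ := ih _ _ a'' (by simp [lamSize] at hs ⊢; omega) hA ha
        exact ⟨.app w1 b'', ParBeta.app hw1 hbb, etaStar_appL _ hw1'⟩
      | @head c c' _ b'' hc hbb =>
        cases hA with
        | head =>
          refine ⟨c'.subst 0 b'', ?_, Relation.ReflTransGen.refl⟩
          have hbody : ParBeta (.app ((Lam.lam c).lift 0) (.var 0)) c' := by
            simp only [Lam.lift]
            have h2 := ParBeta.head (parBeta_lift hc 1) (ParBeta.var 0)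
            rwa [Lam.subst_lift_cancel c' 0] at h2
          exact ParBeta.head hbody hbb
        | @lam c0 _ hA' =>
          obtain ⟨w0, hw0, hw0'⟩ := ih c0 c c' (by simp [lamSize] at hs ⊢; omega) hA' hc
          exact ⟨w0.subst 0 b'', ParBeta.head hw0 hbb, etaStar_subst_left hw0' 0 b''⟩
    | appR a hB =>
      cases hb with
      | @app _ a'' _ b'' ha hbb =>
        obtain ⟨w2, hw2, hw2'⟩ := ih _ _ b'' (by simp [lamSize] at hs ⊢; omega) hB hbb
        exact ⟨.app a'' w2, ParBeta.app ha hw2, etaStar_appR _ hw2'⟩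
      | @head c c' _ b'' hc hbb =>
        obtain ⟨w2, hw2, hw2'⟩ := ih _ _ b'' (by simp [lamSize] at hs ⊢; omega) hB hbb
        exact ⟨c'.subst 0 w2, ParBeta.head hc hw2, etaStar_subst_right c' 0 hw2'⟩
    | lam hA =>
      cases hb with
      | @lam _ a'' ha =>
        obtain ⟨w, hw, hw'⟩ := ih _ _ a'' (by simp [lamSize] at hs ⊢; omega) hA ha
        exact ⟨.lam w, ParBeta.lam hw, etaStar_lam hw'⟩

theorem etaStar_parBeta_swap {t u v : Lam} (he : EtaStar t u) (hb : ParBeta u v) :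
    ∃ w, ParBeta t w ∧ EtaStar w v := by
  induction he using Relation.ReflTransGen.head_induction_on with
  | refl => exact ⟨v, hb, Relation.ReflTransGen.refl⟩
  | head h1 _ ih =>
    obtain ⟨w, hw, hw'⟩ := ih
    obtain ⟨w2, hw2, hw2'⟩ := eta_parBeta_swap (lamSize _ + 1) _ _ _ (Nat.lt_succ_self _) h1 hw
    exact ⟨w2, hw2, hw2'.trans hw'⟩

/-- Eta-postponement: a combined beta-eta reduction can be factored as
beta steps followed by eta steps. -/
theorem eta_postponement (t t' : Lam) (h : BetaEtaStar t t') :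
    ∃ u : Lam, BetaStar t u ∧ EtaStar u t' := by
  induction h with
  | refl => exact ⟨t, Relation.ReflTransGen.refl, Relation.ReflTransGen.refl⟩
  | tail _ h2 ih =>
    obtain ⟨u, hbu, heu⟩ := ih
    cases h2 with
    | inl hbeta =>
      obtain ⟨w, hw, hw'⟩ := etaStar_parBeta_swap heu (beta_parBeta hbeta)
      exact ⟨w, hbu.trans (parBeta_betaStar hw), hw'⟩
    | inr heta => exact ⟨u, hbu, heu.tail heta⟩
end

section
/- Let D = ∀X{∀Y(Y → X) → X} (a closed type of system F that is not positively quantified), let δ = λx.(x)x and t = λx.(x)(δ)δ. Then t belongs to the semantic interpretation |D|_{βη} (the intersection of |D|_M over all Λ_{βη}-models M), but t is not normalizable; hence the positivity restriction in the completeness theorem is necessary. -/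
/-! System F types and their Λ_{βη}-model semantics. -/

/-- Types of system F (with named type variables). -/
inductive STy : Type
| tvar : ℕ → STy
| arr : STy → STy → STy
| all : ℕ → STy → STy

/-- A Λ_{βη}-model of system F: an adequate collection `R` of sets of lambda
terms closed under beta-eta-equivalence, under the arrow construction and
under arbitrary intersections. -/
structure FModel where
  R : Set (Set Lam)
  sat : ∀ G ∈ R, SaturatedBE G
  arrow_mem : ∀ G G' : Set Lam, G ∈ R → G' ∈ R → ArrowSet G G' ∈ R
  sInter_mem : ∀ S : Set (Set Lam), S ⊆ R → ⋂₀ S ∈ R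

/-- The value `|A|_{M,I}` of a system F type under an interpretation of the
type variables. -/
def STy.val (M : FModel) : STy → (ℕ → Set Lam) → Set Lam
| .tvar X, I => I X
| .arr A B, I => ArrowSet (A.val M I) (B.val M I)
| .all X A, I => ⋂ Ξ : M.R, A.val M (Function.update I X Ξ.1)

/-- The type `D = ∀X{∀Y(Y → X) → X}`. -/
def Dty : STy := .all 0 (.arr (.all 1 (.arr (.tvar 1) (.tvar 0))) (.tvar 0))

/-- `δ = λx.(x)x`. -/
def deltaTm : Lam := .lam (.app (.var 0) (.var 0))

/-- `t = λx.(x)(δ)δ`. -/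
def tTm : Lam := .lam (.app (.var 0) (.app deltaTm deltaTm))

lemma lift_ne_var0 (a : Lam) : a.lift 0 ≠ .var 0 := by
  cases a <;> simp [Lam.lift]

lemma eta_of_lam {b u : Lam} (h : Eta (.lam b) u) :
    b = .app (u.lift 0) (.var 0) ∨ ∃ b', u = .lam b' ∧ Eta b b' := by
  generalize hs : Lam.lam b = s at h
  cases h with
  | head a => injection hs with h1; exact Or.inl h1
  | lam h => injection hs with h1; exact Or.inr ⟨_, rfl, h1 ▸ h⟩
  | appL c h => exact Lam.noConfusion hs
  | appR a h => exact Lam.noConfusion hs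

lemma delta_no_step (u : Lam) : ¬ BetaEta deltaTm u := by
  rintro (h | h)
  · cases h with
    | lam h =>
      cases h with
      | appL b h => cases h
      | appR a h => cases h
  · rcases eta_of_lam h with h1 | ⟨b', rfl, h1⟩
    · injection h1 with h2 _
      exact lift_ne_var0 u h2.symm
    · clear h
      cases h1 with
      | appL b hh => cases hh
      | appR a hh => cases hh

lemma dd_step (u : Lam) (h : BetaEta (.app deltaTm deltaTm) u) :
    u = .app deltaTm deltaTm := by
  rcases h with h | h
  · cases h with
    | head a v => rfl
    | appL b h => exact absurd (Or.inl h) (delta_no_step _)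
    | appR a h => exact absurd (Or.inl h) (delta_no_step _)
  · cases h with
    | appL b h => exact absurd (Or.inr h) (delta_no_step _)
    | appR a h => exact absurd (Or.inr h) (delta_no_step _)

lemma t_step (u : Lam) (h : BetaEta tTm u) : u = tTm := by
  rcases h with h | h
  · cases h with
    | lam h =>
      cases h with
      | appL b h => cases h
      | appR a hh => rw [dd_step _ (Or.inl hh)]; rfl
  · rcases eta_of_lam h with h1 | ⟨b', rfl, h1⟩
    · injection h1 with _ h3
      exact Lam.noConfusion h3
    · clear h
      cases h1 with
      | appL b hh => cases hh
      | appR a hh => rw [dd_step _ (Or.inr hh)]; rfl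

lemma t_self_step : BetaEta tTm tTm := by
  refine Or.inl (Beta.lam (Beta.appR _ ?_))
  have h := Beta.head (Lam.app (.var 0) (.var 0)) deltaTm
  simpa [Lam.subst, deltaTm] using h

/-- The term `t = λx.(x)(δ)δ` belongs to `|D|_{βη}` (its interpretation in
every Λ_{βη}-model, under every interpretation taking values in `R`), yet it
is not normalizable: the positivity restriction in the completeness theorem
is necessary. -/
theorem mem_D_not_normalizable :
    (∀ (M : FModel) (I : ℕ → Set Lam), (∀ X, I X ∈ M.R) → tTm ∈ Dty.val M I) ∧
    ¬ Normalizable tTm := by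
  constructor
  · intro M I _
    simp only [Dty, STy.val, Set.mem_iInter]
    intro Ξ
    intro v hv
    have huniv : (Set.univ : Set Lam) ∈ M.R := by
      have := M.sInter_mem ∅ (by simp)
      simpa using this
    have hv' := Set.mem_iInter.1 hv ⟨Set.univ, huniv⟩
    simp only [Function.update] at hv' ⊢
    have hmem : Lam.app v (.app deltaTm deltaTm) ∈ Ξ.1 := by
      have := hv' (Lam.app deltaTm deltaTm) (by simp)
      simpa using this
    have hstep : Beta (Lam.app tTm v) (Lam.app v (.app deltaTm deltaTm)) := by
      have h := Beta.head (Lam.app (.var 0) (.app deltaTm deltaTm)) v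
      simpa [Lam.subst, deltaTm, tTm] using h
    have := M.sat Ξ.1 Ξ.2 (Lam.app tTm v) (Lam.app v (.app deltaTm deltaTm))
      (Relation.EqvGen.rel _ _ (Or.inl hstep)) hmem
    simpa using this
  · rintro ⟨u, hstar, hnf⟩
    have : u = tTm := by
      clear hnf
      induction hstar with
      | refl => rfl
      | tail _ h ih => rw [ih] at h; exact t_step _ h
    rw [this] at hnf
    exact hnf tTm t_self_step
end
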